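/- arXiv:1410.1460 — 3 statements merged into one kernel-verified Lean document; each statement's English description precedes it below -/
import Mathlib

section
/- (Theorem 3.1, uniform marginal of the distinguished customer) If λ/μ < 1 and λe^{φ}/μ < 1, then for every j ∈ Λ the family (π(j,n)) indexed by n : Λ → ℕ is summable with Σ_{n : Λ → ℕ} π(j,n) = 1/#Λ; in particular, in equilibrium the position of the distinguished customer is uniformly distributed on Λ. -/
/-!
For fixed `j`, `π(j, ·)` is `1/#Λ` times the product measure of independent geometric
distributions on `ℕ`, with ratio `λe^φ/μ` at site `j` and `λ/μ` at every other site: the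
normalising constant in `π` is exactly the reciprocal of the product of the geometric series.
A sum over `Λ → ℕ` of a product of nonnegative factors is the product of the sums.
-/

open Function

theorem hasSum_pi_prod_of_nonneg {ι β : Type*} [Fintype ι] (f : ι → β → ℝ) (s : ι → ℝ)
    (hf : ∀ i b, 0 ≤ f i b) (hs : ∀ i, HasSum (f i) (s i)) :
    HasSum (fun n : ι → β => ∏ i, f i (n i)) (∏ i, s i) := by
  revert f s
  apply Fintype.induction_empty_option (P := fun α [Fintype α] => ∀ (f : α → β → ℝ) (s : α → ℝ),
    (∀ i b, 0 ≤ f i b) → (∀ i, HasSum (f i) (s i)) →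
      HasSum (fun n : α → β => ∏ i, f i (n i)) (∏ i, s i))
  · intro α γ _ e ih f s hf hs
    let := Fintype.ofEquiv γ e.symm
    have h := ih (fun a => f (e a)) (fun a => s (e a)) (fun a => hf (e a)) (fun a => hs (e a))
    rw [Fintype.prod_equiv e _ s fun _ => rfl] at h
    refine ((Equiv.arrowCongr e (Equiv.refl β)).hasSum_iff
      (f := fun n : γ → β => ∏ i, f i (n i))).mp ?_
    convert h using 2 with n
    exact Fintype.prod_equiv e.symm _ _ fun i => by simp
  · intro f s _ _
    simp [hasSum_unique]
  · intro α _ ih f s hf hs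
    have hrest := ih _ _ (fun a => hf (some a)) (fun a => hs (some a))
    have hmul := (hs none).mul hrest <| (hs none).summable.mul_of_nonneg hrest.summable
      (hf none) fun n => Finset.prod_nonneg fun a _ => hf (some a) (n a)
    rw [Fintype.prod_option, ← Equiv.piOptionEquivProd.symm.hasSum_iff]
    simpa [Function.comp_def, Fintype.prod_option] using hmul

theorem hasSum_pi_prod_pow_of_lt_one {ι : Type*} [Fintype ι] {a : ι → ℝ} (h0 : ∀ i, 0 ≤ a i)
    (h1 : ∀ i, a i < 1) :
    HasSum (fun n : ι → ℕ => ∏ i, a i ^ n i) (∏ i, (1 - a i)⁻¹) :=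
  hasSum_pi_prod_of_nonneg (fun i k => a i ^ k) _ (fun i k => pow_nonneg (h0 i) k)
    fun i => hasSum_geometric_of_lt_one (h0 i) (h1 i)

section UpdateConst

variable {ι : Type*} [Fintype ι] [DecidableEq ι]

theorem Fintype.prod_apply_update_const {α M : Type*} [CommMonoid M] (g : α → M) (j : ι)
    (x y : α) : ∏ i, g (update (fun _ => x) j y i) = g y * g x ^ (Fintype.card ι - 1) := by
  simp only [← comp_apply (f := g), comp_update, Finset.prod_update_of_mem (Finset.mem_univ j)]
  simp [Finset.card_sdiff]

theorem Fintype.prod_update_const_mul_pow {M : Type*} [CommMonoid M] (j : ι) (x z : M)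
    (n : ι → ℕ) : ∏ i, update (fun _ => x) j (x * z) i ^ n i = x ^ (∑ i, n i) * z ^ n j := by
  rw [Fintype.prod_eq_mul_prod_compl j, Fintype.sum_eq_add_sum_compl j, update_self,
    Finset.prod_congr rfl fun i hi => by
      rw [update_of_ne (Finset.mem_compl.mp hi ∘ Finset.mem_singleton.mpr)],
    Finset.prod_pow_eq_pow_sum, mul_pow, pow_add]
  exact mul_right_comm _ _ _

end UpdateConst

theorem rw_jackson_uniform_marginal_general
    (Λ : Type*) [Fintype Λ]
    (lam mu φ : ℝ) (hlam : 0 < lam) (hmu : 0 < mu)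
    (hsub1 : lam / mu < 1) (hsub2 : lam * Real.exp φ / mu < 1)
    (π : Λ → (Λ → ℕ) → ℝ)
    (hπ : ∀ (j : Λ) (n : Λ → ℕ), π j n =
      (Fintype.card Λ : ℝ)⁻¹ * (1 - lam * Real.exp φ / mu) *
        (1 - lam / mu) ^ (Fintype.card Λ - 1) *
        (lam / mu) ^ (∑ i, n i) * Real.exp (φ * n j)) :
    ∀ j : Λ, Summable (fun n : Λ → ℕ => π j n) ∧
      ∑' n : Λ → ℕ, π j n = 1 / (Fintype.card Λ : ℝ) := by
  classical
  intro j
  have hre : lam * Real.exp φ / mu = lam / mu * Real.exp φ := mul_div_right_comm _ _ _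
  rw [hre] at hsub2
  set a := update (fun _ : Λ => lam / mu) j (lam / mu * Real.exp φ)
  have ha : ∀ i, 0 ≤ a i ∧ a i < 1 := (forall_update_iff _ fun _ t => 0 ≤ t ∧ t < 1).mpr
    ⟨⟨by positivity, hsub2⟩, fun _ _ => ⟨by positivity, hsub1⟩⟩
  have hπa : ∀ n, π j n = (Fintype.card Λ : ℝ)⁻¹ * (∏ i, (1 - a i)⁻¹)⁻¹ * ∏ i, a i ^ n i := by
    intro n
    rw [hπ, hre, Fintype.prod_update_const_mul_pow,
      Fintype.prod_apply_update_const (fun t => (1 - t)⁻¹), mul_comm φ, Real.exp_nat_mul]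
    simp only [mul_inv, inv_pow, inv_inv]
    ring
  have hnorm : ∏ i, (1 - a i)⁻¹ ≠ 0 :=
    Finset.prod_ne_zero_iff.mpr fun i _ => inv_ne_zero (sub_ne_zero.mpr (ha i).2.ne')
  have hsum := (hasSum_pi_prod_pow_of_lt_one (fun i => (ha i).1) fun i => (ha i).2).mul_left
    ((Fintype.card Λ : ℝ)⁻¹ * (∏ i, (1 - a i)⁻¹)⁻¹)
  rw [inv_mul_cancel_right₀ hnorm, ← funext hπa, ← one_div] at hsum
  exact ⟨hsum.summable, hsum.tsum_eq⟩

/-- Theorem 3.1, uniform marginal of the distinguished customer: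
under sub-criticality, for each `j` the sum over all configurations `n` of
`π(j,n)` equals `1/#Λ`; the position of the distinguished customer is uniform. -/
theorem rw_jackson_uniform_marginal
    (Λ : Type*) [Fintype Λ] [Nonempty Λ]
    (lam mu φ : ℝ) (hlam : 0 < lam) (hmu : 0 < mu)
    (hsub1 : lam / mu < 1) (hsub2 : lam * Real.exp φ / mu < 1)
    (π : Λ → (Λ → ℕ) → ℝ)
    (hπ : ∀ (j : Λ) (n : Λ → ℕ), π j n =
      (Fintype.card Λ : ℝ)⁻¹ * (1 - lam * Real.exp φ / mu) *
        (1 - lam / mu) ^ (Fintype.card Λ - 1) *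
        (lam / mu) ^ (∑ i, n i) * Real.exp (φ * n j)) :
    ∀ j : Λ, Summable (fun n : Λ → ℕ => π j n) ∧
      ∑' n : Λ → ℕ, π j n = 1 / (Fintype.card Λ : ℝ) :=
  rw_jackson_uniform_marginal_general Λ lam mu φ hlam hmu hsub1 hsub2 π hπ
end

section
/- (Theorem 3.3, closed network) Fix N ∈ ℕ. Suppose the symmetry conditions hold: β_{kl}(n_k,n_l;j) = β_{lk}(n_l+1,n_k−1;j) for all j and all k ≠ l with k ≠ j, l ≠ j and n_k ≥ 1; θ_{jk}(n_j,n_k) = θ_{kj}(n_k+1,n_j−1) for all k ≠ j with n_j ≥ 1; and τ_{jj'}(n) = τ_{j'j}(n) for all j ≠ j'. Then on the set {(j,n) : j ∈ Λ, n : Λ → ℕ, |n| = N} the probabilities π(j,n) = γ̄_j(n_j)/Ξ_{N,Λ}, where Ξ_{N,Λ} = Σ_{n : |n| = N} Σ_{l∈Λ} γ̄_l(n_l), satisfy the detailed balance equations: (i) π(j,n)·β_{kl}(n_k,n_l;j) = π(j, n+e^{k→l})·β_{lk}(n_l+1,n_k−1;j) for k ≠ j, l ≠ j, k ≠ l, n_k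 ≥ 1; (ii) π(j,n)·θ_{jk}(n_j,n_k) = π(j, n+e^{j→k})·θ_{kj}(n_k+1,n_j−1)·γ_j(n_j−1) for k ≠ j, n_j ≥ 1; (iii) π(j,n)·θ_{kj}(n_k,n_j)·γ_j(n_j) = π(j, n+e^{k→j})·θ_{jk}(n_j+1,n_k−1) for k ≠ j, n_k ≥ 1; (iv) π(j,n)·γ̄_j(n_j)^{−1}·τ_{jj'}(n) = π(j',n)·γ̄_{j'}(n_{j'})^{−1}·τ_{j'j}(n) for j' ≠ j. -/
/-! Each equation compares two states with the same distinguished site `j`, and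
`π(j, n) = γ̄_j(n_j) / Ξ` sees only the load `n_j`. A move avoiding `j` leaves `n_j`
unchanged, so (i) is the symmetry of `β`; a move out of or into `j` changes `γ̄_j` by
exactly the factor `γ_j(n_j - 1)` resp. `γ_j(n_j)` that appears on the other side of
(ii) and (iii), so these reduce to the symmetry of `θ`; and in (iv) both sides equal
`τ_{jj'}(n) / Ξ`. -/

/-- The `e^k` configuration increment: `n + e^k`. -/
def bump {Λ : Type*} [DecidableEq Λ] (n : Λ → ℕ) (k : Λ) : Λ → ℕ :=
  fun l => n l + (if l = k then 1 else 0)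

/-- The jump move `n + e^{i→k} = n - e^i + e^k`. -/
def move {Λ : Type*} [DecidableEq Λ] (n : Λ → ℕ) (i k : Λ) : Λ → ℕ :=
  fun l => n l - (if l = i then 1 else 0) + (if l = k then 1 else 0)

section Move

variable {Λ : Type*} [DecidableEq Λ] (n : Λ → ℕ) {i k s : Λ}

theorem move_apply_of_ne (hsi : s ≠ i) (hsk : s ≠ k) : move n i k s = n s := by
  simp [move, hsi, hsk]

theorem move_apply_left (hik : i ≠ k) : move n i k i = n i - 1 := by
  simp [move, hik]

theorem move_apply_right (hik : i ≠ k) : move n i k k = n k + 1 := by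
  simp [move, hik.symm]

theorem sum_move [Fintype Λ] (hik : i ≠ k) (hi : 1 ≤ n i) :
    ∑ s, move n i k s = ∑ s, n s := by
  -- adding `e^i` back on the left undoes the truncated subtraction in `move`
  have hpointwise : ∀ s, move n i k s + (if s = i then 1 else 0)
      = n s + (if s = k then 1 else 0) := by
    intro s
    by_cases hs : s = i
    · subst hs
      simp [move, hik, Nat.sub_add_cancel hi]
    · simp [move, hs]
  have hsum := Fintype.sum_congr _ _ hpointwise
  simpa [Finset.sum_add_distrib] using hsum

end Move

theorem closed_rw_jackson_detailed_balance_general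
    (Λ : Type*) [Fintype Λ] [DecidableEq Λ] (N : ℕ)
    (gam : Λ → ℕ → ℝ)
    (hgam : ∀ i m, 0 < gam i m)
    (gamBar : Λ → ℕ → ℝ)
    (hgamBar : ∀ i m, gamBar i m = ∏ u ∈ Finset.range m, gam i u)
    (β : Λ → Λ → ℕ → ℕ → Λ → ℝ) (θ : Λ → Λ → ℕ → ℕ → ℝ) (τ : Λ → Λ → (Λ → ℕ) → ℝ)
    -- symmetry conditions
    (hβ : ∀ (k l j : Λ) (a b : ℕ), k ≠ l → k ≠ j → l ≠ j → 1 ≤ a →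
      β k l a b j = β l k (b + 1) (a - 1) j)
    (hθ : ∀ (j k : Λ) (a b : ℕ), k ≠ j → 1 ≤ a →
      θ j k a b = θ k j (b + 1) (a - 1))
    (hτ : ∀ (j j' : Λ) (n : Λ → ℕ), j ≠ j' → τ j j' n = τ j' j n)
    (Ξ : ℝ)
    (π : Λ → (Λ → ℕ) → ℝ)
    (hπ : ∀ (j : Λ) (n : Λ → ℕ), ∑ s, n s = N → π j n = gamBar j (n j) / Ξ) :
    ∀ (j : Λ) (n : Λ → ℕ), ∑ s, n s = N →
      -- (i) task jump between unloaded sites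
      (∀ k l, k ≠ j → l ≠ j → k ≠ l → 1 ≤ n k →
        π j n * β k l (n k) (n l) j =
          π j (move n k l) * β l k (n l + 1) (n k - 1) j) ∧
      -- (ii) task jump from the loaded site
      (∀ k, k ≠ j → 1 ≤ n j →
        π j n * θ j k (n j) (n k) =
          π j (move n j k) * (θ k j (n k + 1) (n j - 1) * gam j (n j - 1))) ∧
      -- (iii) task jump to the loaded site
      (∀ k, k ≠ j → 1 ≤ n k →
        π j n * (θ k j (n k) (n j) * gam j (n j)) =
          π j (move n k j) * θ j k (n j + 1) (n k - 1)) ∧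
      -- (iv) leap of the distinguished customer
      (∀ j', j' ≠ j →
        π j n * (gamBar j (n j))⁻¹ * τ j j' n =
          π j' n * (gamBar j' (n j'))⁻¹ * τ j' j n) := by
  intro j n hn
  have hπ_move : ∀ i k, i ≠ k → 1 ≤ n i → π j (move n i k) = gamBar j (move n i k j) / Ξ :=
    fun i k hik hi => hπ j _ (by rw [sum_move n hik hi, hn])
  have hgamBar_succ : ∀ m, gamBar j (m + 1) = gamBar j m * gam j m := fun m => by
    rw [hgamBar, hgamBar, Finset.prod_range_succ]
  have hgamBar_ne : ∀ i m, gamBar i m ≠ 0 := fun i m => by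
    rw [hgamBar]
    exact Finset.prod_ne_zero_iff.mpr fun u _ => (hgam i u).ne'
  refine ⟨?_, ?_, ?_, ?_⟩
  · intro k l hkj hlj hkl hk
    rw [hπ j n hn, hπ_move k l hkl hk, move_apply_of_ne n hkj.symm hlj.symm,
      hβ k l j _ _ hkl hkj hlj hk]
  · intro k hkj hj
    rw [hπ j n hn, hπ_move j k hkj.symm hj, move_apply_left n hkj.symm, hθ j k _ _ hkj hj]
    obtain ⟨m, hm⟩ := Nat.exists_eq_add_of_le' hj
    rw [hm, Nat.add_sub_cancel, hgamBar_succ]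
    ring
  · intro k hkj hk
    rw [hπ j n hn, hπ_move k j hkj hk, move_apply_right n hkj, hθ k j _ _ hkj.symm hk,
      hgamBar_succ]
    ring
  · intro j' hj'
    rw [hπ j n hn, hπ j' n hn, hτ j j' n hj'.symm]
    field_simp [hgamBar_ne]

/-- Theorem 3.3, closed network: under the symmetry conditions, on
`{(j,n) : |n| = N}` the probabilities `π(j,n) = γ̄_j(n_j)/Ξ_{N,Λ}` satisfy the
detailed balance equations. -/
theorem closed_rw_jackson_detailed_balance
    (Λ : Type*) [Fintype Λ] [DecidableEq Λ] [Nonempty Λ] (N : ℕ)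
    (gam : Λ → ℕ → ℝ)
    (hgam : ∀ i m, 0 < gam i m) (hgam0 : ∀ i, gam i 0 = 1)
    (gamBar : Λ → ℕ → ℝ)
    (hgamBar : ∀ i m, gamBar i m = ∏ u ∈ Finset.range m, gam i u)
    (β : Λ → Λ → ℕ → ℕ → Λ → ℝ) (θ : Λ → Λ → ℕ → ℕ → ℝ) (τ : Λ → Λ → (Λ → ℕ) → ℝ)
    (hβnn : ∀ k l a b j, 0 ≤ β k l a b j) (hθnn : ∀ j k a b, 0 ≤ θ j k a b)
    (hτnn : ∀ j j' n, 0 ≤ τ j j' n)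
    -- symmetry conditions
    (hβ : ∀ (k l j : Λ) (a b : ℕ), k ≠ l → k ≠ j → l ≠ j → 1 ≤ a →
      β k l a b j = β l k (b + 1) (a - 1) j)
    (hθ : ∀ (j k : Λ) (a b : ℕ), k ≠ j → 1 ≤ a →
      θ j k a b = θ k j (b + 1) (a - 1))
    (hτ : ∀ (j j' : Λ) (n : Λ → ℕ), j ≠ j' → τ j j' n = τ j' j n)
    (Ξ : ℝ)
    (hΞ : Ξ = ∑' n : {n : Λ → ℕ // ∑ s, n s = N}, ∑ l, gamBar l (n.1 l))
    (π : Λ → (Λ → ℕ) → ℝ)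
    (hπ : ∀ (j : Λ) (n : Λ → ℕ), ∑ s, n s = N → π j n = gamBar j (n j) / Ξ) :
    ∀ (j : Λ) (n : Λ → ℕ), ∑ s, n s = N →
      -- (i) task jump between unloaded sites
      (∀ k l, k ≠ j → l ≠ j → k ≠ l → 1 ≤ n k →
        π j n * β k l (n k) (n l) j =
          π j (move n k l) * β l k (n l + 1) (n k - 1) j) ∧
      -- (ii) task jump from the loaded site
      (∀ k, k ≠ j → 1 ≤ n j →
        π j n * θ j k (n j) (n k) =
          π j (move n j k) * (θ k j (n k + 1) (n j - 1) * gam j (n j - 1))) ∧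
      -- (iii) task jump to the loaded site
      (∀ k, k ≠ j → 1 ≤ n k →
        π j n * (θ k j (n k) (n j) * gam j (n j)) =
          π j (move n k j) * θ j k (n j + 1) (n k - 1)) ∧
      -- (iv) leap of the distinguished customer
      (∀ j', j' ≠ j →
        π j n * (gamBar j (n j))⁻¹ * τ j j' n =
          π j' n * (gamBar j' (n j'))⁻¹ * τ j' j n) :=
  closed_rw_jackson_detailed_balance_general Λ N gam hgam gamBar hgamBar β θ τ hβ hθ hτ Ξ π hπ
end

section
/- (Theorem 5.2, zero-range system, open-open network, detailed balance) Suppose: the product V(n) = ∏_{q∈Λ} λ̄_q(n_q;y)/μ̄_q(n_q;y) does not depend on the configuration y : Λ → ℕ (condition 4.10); condition (4.2a) λ_k(n_k−1;y)/μ_k(n_k;y)·β_{kl}(n_k,n_l;y) = λ_l(n_l;y)/μ_l(n_l+1;y)·β_{lk}(n_l+1,n_k−1;y) for k ≠ l, y_k = y_l = 0, n_k ≥ 1; condition (4.2b) λ_j(n_j−1;y)/μ_j(n_j;y)·θ_{jk}(n_j,n_k;y) = λ_k(n_k;y)/μ_k(n_k+1;y)·θ_{kj}(n_k+1,n_j−1;y)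 for y_j ≥ 1, y_k = 0, n_j ≥ 1; condition (5.2) λ_i(n_i−1;y)·[γ_i(n_i−1)]^{y_i}/μ_i(n_i;y)·ε_{ij}(n_i,n_j;y) = λ_j(n_j;y)·[γ_j(n_j)]^{y_j}/μ_j(n_j+1;y)·ε_{ji}(n_j+1,n_i−1;y) for i ≠ j, y_i ≥ 1, y_j ≥ 1, n_i ≥ 1; and condition (4.11) τ_{jj'}(n;y)·ξ_j/η_j = τ_{j'j}(n;y+e^{j→j'})·ξ_{j'}/η_{j'} for y_j ≥ 1, j' ≠ j. Then the weight w(y,n) = V(n)·∏_{q∈Λ} [ξ_q γ̄_q(n_q)/η_q]^{y_q} satisfies the detailed balance equations: (i) w(y,n)·λ_p(n_p;y)·[γ_p(n_p)]^{y_p} = w(y, n+e^p)·μ_p(n_p+1;y) for every p ∈ Λ; (ii) w(y,n)·β_{kl}(n_k,n_l;y) = w(y, n+e^{k→l})·β_{lk}(n_l+1,n_k−1;y) for y_k = y_l = 0, k ≠ l, n_k ≥ 1; (iii) w(y,n)·ε_{ij}(n_i,n_j;y) = w(y, n+e^{i→j})·ε_{ji}(n_j+1,n_i−1;y) for y_i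 ≥ 1, y_j ≥ 1, i ≠ j, n_i ≥ 1; (iv) w(y,n)·θ_{jk}(n_j,n_k;y) = w(y, n+e^{j→k})·θ_{kj}(n_k+1,n_j−1;y)·[γ_j(n_j−1)]^{y_j} for y_j ≥ 1, y_k = 0, n_j ≥ 1; (v) w(y,n)·[γ̄_j(n_j)]^{−y_j}·τ_{jj'}(n;y)·[γ̄_{j'}(n_{j'})]^{−y_{j'}} = w(y', n)·[γ̄_j(n_j)]^{−y'_j}·τ_{j'j}(n;y')·[γ̄_{j'}(n_{j'})]^{−y'_{j'}}, where y' = y + e^{j→j'}, for y_j ≥ 1, j' ≠ j; (vi) w(y,n)·ξ_p γ̄_p(n_p) = w(y+e^p, n)·η_p for every p ∈ Λ (arrival of a distinguished customer at p paired with its exit). -/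
/-!
The weight factorises over sites: by (4.10) the factor `V` may be evaluated at the current `y`,
so `w(y,n) = ∏_q F_q(n_q)` with `F_q(m) = F_q(m-1) · λ_q(m-1) γ_q(m-1)^{y_q} / μ_q(m)`; for fixed
`n` it is also a product of powers `∏_q a_q^{y_q}` with `a_q = ξ_q γ̄_q(n_q) / η_q`. Moving one
unit from site `i` to site `k` changes only two factors, and both configurations are obtained by
adding one unit to the configuration with that unit removed. After cancelling the weight of that
common configuration, each balance equation is exactly one of the local conditions (4.2a), (5.2),
(4.2b), (4.11).
-/

section ProductForm

variable {Λ M : Type*} [DecidableEq Λ]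

theorem bump_update_pred {n : Λ → ℕ} {i : Λ} (hn : 1 ≤ n i) :
    bump (Function.update n i (n i - 1)) i = n := by
  ext l
  by_cases h : l = i
  · subst h
    simp only [bump, Function.update_self, if_true]
    omega
  · simp [bump, h]

theorem bump_update_pred_eq_move (n : Λ → ℕ) (i k : Λ) :
    bump (Function.update n i (n i - 1)) k = move n i k := by
  ext l
  by_cases h : l = i <;> simp [bump, move, h]

theorem move_apply_source {n : Λ → ℕ} {i k : Λ} (hik : i ≠ k) : move n i k i = n i - 1 := by
  simp [move, hik]

theorem move_apply_target {n : Λ → ℕ} {i k : Λ} (hik : i ≠ k) : move n i k k = n k + 1 := by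
  simp [move, hik.symm]

variable [Fintype Λ] [CommMonoid M] {f r : Λ → ℕ → M}

theorem prod_apply_bump (hf : ∀ q m, f q (m + 1) = f q m * r q (m + 1)) (n : Λ → ℕ) (p : Λ) :
    ∏ q, f q (bump n p q) = (∏ q, f q (n q)) * r p (n p + 1) := by
  calc ∏ q, f q (bump n p q)
      = ∏ q, f q (n q) * (if q = p then r p (n p + 1) else 1) :=
        Finset.prod_congr rfl fun q _ => by by_cases h : q = p <;> simp [bump, h, hf]
    _ = (∏ q, f q (n q)) * r p (n p + 1) := by
        rw [Finset.prod_mul_distrib, Finset.prod_ite_eq']; simp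

theorem prod_mul_eq_prod_move_mul (hf : ∀ q m, f q (m + 1) = f q m * r q (m + 1))
    {n : Λ → ℕ} {i k : Λ} (hik : i ≠ k) (hn : 1 ≤ n i)
    {b b' : M} (hbal : r i (n i) * b = r k (n k + 1) * b') :
    (∏ q, f q (n q)) * b = (∏ q, f q (move n i k q)) * b' := by
  set m := Function.update n i (n i - 1)
  have hsrc : ∏ q, f q (n q) = (∏ q, f q (m q)) * r i (n i) := by
    conv_lhs => rw [← bump_update_pred hn]
    rw [prod_apply_bump hf, Function.update_self, Nat.sub_add_cancel hn]
  have htgt : ∏ q, f q (move n i k q) = (∏ q, f q (m q)) * r k (n k + 1) := by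
    rw [← bump_update_pred_eq_move, prod_apply_bump hf, Function.update_of_ne hik.symm]
  rw [hsrc, htgt, mul_assoc, hbal, mul_assoc]

theorem prod_pow_mul_inv_pow_eq_move {a c g : Λ → ℝ} (ha : ∀ q, a q = c q * g q)
    (hg : ∀ q, g q ≠ 0) {y : Λ → ℕ} {j j' : Λ} (hjj : j ≠ j') (hy : 1 ≤ y j) {t t' : ℝ}
    (hbal : t * c j = t' * c j') :
    (∏ q, a q ^ y q) * (g j ^ y j)⁻¹ * t * (g j' ^ y j')⁻¹ =
      (∏ q, a q ^ move y j j' q) * (g j ^ move y j j' j)⁻¹ * t' * (g j' ^ move y j j' j')⁻¹ := by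
  obtain ⟨s, hs⟩ : ∃ s, y j = s + 1 := ⟨y j - 1, by omega⟩
  have key := prod_mul_eq_prod_move_mul (r := fun q _ => a q) (fun q k => pow_succ (a q) k)
    hjj hy (b := (g j ^ (s + 1))⁻¹ * t * (g j' ^ y j')⁻¹)
    (b' := (g j ^ s)⁻¹ * t' * (g j' ^ (y j' + 1))⁻¹) (by
      rw [ha, ha]
      field_simp [hg j, hg j']
      linear_combination g j ^ (s + 1) * g j' ^ (y j' + 1) * hbal)
  rw [move_apply_source hjj, move_apply_target hjj, hs, Nat.add_sub_cancel]
  linear_combination key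

end ProductForm

section ZeroRange

variable {Λ : Type*}

noncomputable def siteWeight (lamBar muBar : Λ → ℕ → (Λ → ℕ) → ℝ) (gamBar : Λ → ℕ → ℝ) (ξ η : Λ → ℝ)
    (y : Λ → ℕ) (q : Λ) (m : ℕ) : ℝ :=
  lamBar q m y / muBar q m y * (ξ q * gamBar q m / η q) ^ y q

/-- Indexed by the larger of the two occupation numbers, as in (4.2) and (5.2). -/
noncomputable def siteRatio (lam mu : Λ → ℕ → (Λ → ℕ) → ℝ) (gam : Λ → ℕ → ℝ) (y : Λ → ℕ)
    (q : Λ) (m : ℕ) : ℝ :=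
  lam q (m - 1) y * gam q (m - 1) ^ y q / mu q m y

theorem siteWeight_succ {lam mu lamBar muBar : Λ → ℕ → (Λ → ℕ) → ℝ} {gam gamBar : Λ → ℕ → ℝ}
    (hlamBar : ∀ p m y, lamBar p m y = ∏ u ∈ Finset.range m, lam p u y)
    (hmuBar : ∀ p m y, muBar p m y = ∏ u ∈ Finset.range m, mu p (u + 1) y)
    (hgamBar : ∀ p m, gamBar p m = ∏ u ∈ Finset.range m, gam p u) (ξ η : Λ → ℝ)
    (y : Λ → ℕ) (q : Λ) (m : ℕ) :
    siteWeight lamBar muBar gamBar ξ η y q (m + 1) =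
      siteWeight lamBar muBar gamBar ξ η y q m * siteRatio lam mu gam y q (m + 1) := by
  simp only [siteWeight, siteRatio, hlamBar, hmuBar, hgamBar, Finset.prod_range_succ,
    Nat.add_sub_cancel]
  ring

end ZeroRange

theorem zero_range_open_open_detailed_balance_general
    (Λ : Type*) [Fintype Λ] [DecidableEq Λ]
    (lam mu : Λ → ℕ → (Λ → ℕ) → ℝ) (gam : Λ → ℕ → ℝ)
    (hmu : ∀ p m y, 0 < mu p m y)
    (hgam : ∀ p m, 0 < gam p m)
    (lamBar muBar : Λ → ℕ → (Λ → ℕ) → ℝ) (gamBar : Λ → ℕ → ℝ)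
    (hlamBar : ∀ p m y, lamBar p m y = ∏ u ∈ Finset.range m, lam p u y)
    (hmuBar : ∀ p m y, muBar p m y = ∏ u ∈ Finset.range m, mu p (u + 1) y)
    (hgamBar : ∀ p m, gamBar p m = ∏ u ∈ Finset.range m, gam p u)
    (β θ ε : Λ → Λ → ℕ → ℕ → (Λ → ℕ) → ℝ) (τ : Λ → Λ → (Λ → ℕ) → (Λ → ℕ) → ℝ)
    (ξ η : Λ → ℝ) (hη : ∀ p, 0 < η p)
    -- (4.10): V(n) does not depend on y
    (V : (Λ → ℕ) → ℝ)
    (hV : ∀ (y : Λ → ℕ) (n : Λ → ℕ),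
      V n = ∏ q, lamBar q (n q) y / muBar q (n q) y)
    -- (4.2a)
    (h42a : ∀ (y : Λ → ℕ) (k l : Λ) (a b : ℕ),
      k ≠ l → y k = 0 → y l = 0 → 1 ≤ a →
      lam k (a - 1) y / mu k a y * β k l a b y =
        lam l b y / mu l (b + 1) y * β l k (b + 1) (a - 1) y)
    -- (4.2b)
    (h42b : ∀ (y : Λ → ℕ) (j k : Λ) (a b : ℕ),
      1 ≤ y j → y k = 0 → 1 ≤ a →
      lam j (a - 1) y / mu j a y * θ j k a b y =
        lam k b y / mu k (b + 1) y * θ k j (b + 1) (a - 1) y)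
    -- (5.2)
    (h52 : ∀ (y : Λ → ℕ) (i j : Λ) (a b : ℕ),
      i ≠ j → 1 ≤ y i → 1 ≤ y j → 1 ≤ a →
      lam i (a - 1) y * gam i (a - 1) ^ (y i) / mu i a y * ε i j a b y =
        lam j b y * gam j b ^ (y j) / mu j (b + 1) y * ε j i (b + 1) (a - 1) y)
    -- (4.11)
    (h411 : ∀ (y : Λ → ℕ) (j j' : Λ) (n : Λ → ℕ),
      1 ≤ y j → j' ≠ j →
      τ j j' n y * ξ j / η j = τ j' j n (move y j j') * ξ j' / η j')
    (w : (Λ → ℕ) → (Λ → ℕ) → ℝ)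
    (hw : ∀ (y n : Λ → ℕ), w y n =
      V n * ∏ q, (ξ q * gamBar q (n q) / η q) ^ (y q)) :
    ∀ (y n : Λ → ℕ),
      -- (i) arrival at p paired with exit from p
      (∀ p, w y n * (lam p (n p) y * gam p (n p) ^ (y p)) =
        w y (bump n p) * mu p (n p + 1) y) ∧
      -- (ii) task jump between unloaded sites
      (∀ k l, y k = 0 → y l = 0 → k ≠ l → 1 ≤ n k →
        w y n * β k l (n k) (n l) y =
          w y (move n k l) * β l k (n l + 1) (n k - 1) y) ∧
      -- (iii) task jump between loaded sites
      (∀ i j, 1 ≤ y i → 1 ≤ y j → i ≠ j → 1 ≤ n i →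
        w y n * ε i j (n i) (n j) y =
          w y (move n i j) * ε j i (n j + 1) (n i - 1) y) ∧
      -- (iv) task jump from a loaded to an unloaded site
      (∀ j k, 1 ≤ y j → y k = 0 → 1 ≤ n j →
        w y n * θ j k (n j) (n k) y =
          w y (move n j k) *
            (θ k j (n k + 1) (n j - 1) y * gam j (n j - 1) ^ (y j))) ∧
      -- (v) leap of a distinguished customer
      (∀ j j', 1 ≤ y j → j' ≠ j →
        w y n * (gamBar j (n j) ^ (y j))⁻¹ * τ j j' n y *
            (gamBar j' (n j') ^ (y j'))⁻¹ =
          w (move y j j') n * (gamBar j (n j) ^ (move y j j' j))⁻¹ *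
            τ j' j n (move y j j') *
            (gamBar j' (n j') ^ (move y j j' j'))⁻¹) ∧
      -- (vi) arrival of a distinguished customer paired with its exit
      (∀ p, w y n * (ξ p * gamBar p (n p)) = w (bump y p) n * η p) := by
  intro y n
  have hF : ∀ y n, w y n = ∏ q, siteWeight lamBar muBar gamBar ξ η y q (n q) := fun y n => by
    rw [hw, hV y, ← Finset.prod_mul_distrib]; rfl
  have hFsucc := siteWeight_succ (lam := lam) (mu := mu) hlamBar hmuBar hgamBar ξ η y
  refine ⟨fun p => ?_, fun k l hyk hyl hkl hnk => ?_, fun i j hyi hyj hij hni => ?_,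
    fun j k hyj hyk hnj => ?_, fun j j' hyj hjj' => ?_, fun p => ?_⟩
  · rw [hF, hF, prod_apply_bump hFsucc, siteRatio, Nat.add_sub_cancel, mul_assoc,
      div_mul_cancel₀ _ (hmu p _ y).ne']
  · rw [hF, hF]
    refine prod_mul_eq_prod_move_mul hFsucc hkl hnk ?_
    simpa [siteRatio, hyk, hyl] using h42a y k l (n k) (n l) hkl hyk hyl hnk
  · rw [hF, hF]
    refine prod_mul_eq_prod_move_mul hFsucc hij hni ?_
    simpa [siteRatio] using h52 y i j (n i) (n j) hij hyi hyj hni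
  · have hjk : j ≠ k := fun h => by rw [h, hyk] at hyj; omega
    rw [hF, hF]
    refine prod_mul_eq_prod_move_mul hFsucc hjk hnj ?_
    simp only [siteRatio, hyk, pow_zero, mul_one, Nat.add_sub_cancel]
    linear_combination gam j (n j - 1) ^ y j * h42b y j k (n j) (n k) hyj hyk hnj
  · have hg : ∀ q, gamBar q (n q) ≠ 0 := fun q => by
      rw [hgamBar]; exact (Finset.prod_pos fun u _ => hgam q u).ne'
    have hbal : τ j j' n y * (ξ j / η j) = τ j' j n (move y j j') * (ξ j' / η j') := by
      simpa only [mul_div_assoc] using h411 y j j' n hyj hjj'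
    rw [hw, hw]
    linear_combination V n *
      prod_pow_mul_inv_pow_eq_move (fun q => mul_div_right_comm _ _ _) hg hjj'.symm hyj hbal
  · rw [hw, hw, prod_apply_bump (r := fun q _ => ξ q * gamBar q (n q) / η q)
      (fun q k => pow_succ _ k) y p]
    field_simp [(hη p).ne']

/-- Theorem 5.2, zero-range system, open-open network, detailed
balance: under conditions (4.10), (4.2), (5.2) and (4.11), the weights
`w(y,n) = V(n) ∏_q [ξ_q γ̄_q(n_q)/η_q]^{y_q}` satisfy detailed balance. Here
`y : Λ → ℕ` counts distinguished customers per site. -/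
theorem zero_range_open_open_detailed_balance
    (Λ : Type*) [Fintype Λ] [DecidableEq Λ] [Nonempty Λ]
    (lam mu : Λ → ℕ → (Λ → ℕ) → ℝ) (gam : Λ → ℕ → ℝ)
    (hlam : ∀ p m y, 0 ≤ lam p m y) (hmu : ∀ p m y, 0 < mu p m y)
    (hgam : ∀ p m, 0 < gam p m) (hgam0 : ∀ p, gam p 0 = 1)
    (lamBar muBar : Λ → ℕ → (Λ → ℕ) → ℝ) (gamBar : Λ → ℕ → ℝ)
    (hlamBar : ∀ p m y, lamBar p m y = ∏ u ∈ Finset.range m, lam p u y)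
    (hmuBar : ∀ p m y, muBar p m y = ∏ u ∈ Finset.range m, mu p (u + 1) y)
    (hgamBar : ∀ p m, gamBar p m = ∏ u ∈ Finset.range m, gam p u)
    (β θ ε : Λ → Λ → ℕ → ℕ → (Λ → ℕ) → ℝ) (τ : Λ → Λ → (Λ → ℕ) → (Λ → ℕ) → ℝ)
    (hβnn : ∀ k l a b y, 0 ≤ β k l a b y) (hθnn : ∀ j k a b y, 0 ≤ θ j k a b y)
    (hεnn : ∀ i j a b y, 0 ≤ ε i j a b y) (hτnn : ∀ j j' n y, 0 ≤ τ j j' n y)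
    (ξ η : Λ → ℝ) (hξ : ∀ p, 0 < ξ p) (hη : ∀ p, 0 < η p)
    -- (4.10): V(n) does not depend on y
    (V : (Λ → ℕ) → ℝ)
    (hV : ∀ (y : Λ → ℕ) (n : Λ → ℕ),
      V n = ∏ q, lamBar q (n q) y / muBar q (n q) y)
    -- (4.2a)
    (h42a : ∀ (y : Λ → ℕ) (k l : Λ) (a b : ℕ),
      k ≠ l → y k = 0 → y l = 0 → 1 ≤ a →
      lam k (a - 1) y / mu k a y * β k l a b y =
        lam l b y / mu l (b + 1) y * β l k (b + 1) (a - 1) y)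
    -- (4.2b)
    (h42b : ∀ (y : Λ → ℕ) (j k : Λ) (a b : ℕ),
      1 ≤ y j → y k = 0 → 1 ≤ a →
      lam j (a - 1) y / mu j a y * θ j k a b y =
        lam k b y / mu k (b + 1) y * θ k j (b + 1) (a - 1) y)
    -- (5.2)
    (h52 : ∀ (y : Λ → ℕ) (i j : Λ) (a b : ℕ),
      i ≠ j → 1 ≤ y i → 1 ≤ y j → 1 ≤ a →
      lam i (a - 1) y * gam i (a - 1) ^ (y i) / mu i a y * ε i j a b y =
        lam j b y * gam j b ^ (y j) / mu j (b + 1) y * ε j i (b + 1) (a - 1) y)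
    -- (4.11)
    (h411 : ∀ (y : Λ → ℕ) (j j' : Λ) (n : Λ → ℕ),
      1 ≤ y j → j' ≠ j →
      τ j j' n y * ξ j / η j = τ j' j n (move y j j') * ξ j' / η j')
    (w : (Λ → ℕ) → (Λ → ℕ) → ℝ)
    (hw : ∀ (y n : Λ → ℕ), w y n =
      V n * ∏ q, (ξ q * gamBar q (n q) / η q) ^ (y q)) :
    ∀ (y n : Λ → ℕ),
      -- (i) arrival at p paired with exit from p
      (∀ p, w y n * (lam p (n p) y * gam p (n p) ^ (y p)) =
        w y (bump n p) * mu p (n p + 1) y) ∧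
      -- (ii) task jump between unloaded sites
      (∀ k l, y k = 0 → y l = 0 → k ≠ l → 1 ≤ n k →
        w y n * β k l (n k) (n l) y =
          w y (move n k l) * β l k (n l + 1) (n k - 1) y) ∧
      -- (iii) task jump between loaded sites
      (∀ i j, 1 ≤ y i → 1 ≤ y j → i ≠ j → 1 ≤ n i →
        w y n * ε i j (n i) (n j) y =
          w y (move n i j) * ε j i (n j + 1) (n i - 1) y) ∧
      -- (iv) task jump from a loaded to an unloaded site
      (∀ j k, 1 ≤ y j → y k = 0 → 1 ≤ n j →
        w y n * θ j k (n j) (n k) y =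
          w y (move n j k) *
            (θ k j (n k + 1) (n j - 1) y * gam j (n j - 1) ^ (y j))) ∧
      -- (v) leap of a distinguished customer
      (∀ j j', 1 ≤ y j → j' ≠ j →
        w y n * (gamBar j (n j) ^ (y j))⁻¹ * τ j j' n y *
            (gamBar j' (n j') ^ (y j'))⁻¹ =
          w (move y j j') n * (gamBar j (n j) ^ (move y j j' j))⁻¹ *
            τ j' j n (move y j j') *
            (gamBar j' (n j') ^ (move y j j' j'))⁻¹) ∧
      -- (vi) arrival of a distinguished customer paired with its exit
      (∀ p, w y n * (ξ p * gamBar p (n p)) = w (bump y p) n * η p) :=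
  zero_range_open_open_detailed_balance_general Λ lam mu gam hmu hgam lamBar muBar gamBar hlamBar
    hmuBar hgamBar β θ ε τ ξ η hη V hV h42a h42b h52 h411 w hw
end
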